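/- If U ⊆ k^n is a subspace such that for every basis b of a matroid M on {1,...,n} the composition U ↪ k^n ↠ span{t_i : i ∈ b} is an isomorphism, then the orthogonal complement U^⊥ = ker((k^n)^* → U^*) has the same property with respect to the dual matroid M^∨, i.e. for every basis b^c of M^∨ the projection U^⊥ → span{u_i : i ∈ b^c} is an isomorphism. -/

import Mathlib

/-!
Let `b` be a basis of `M✶`, so that `c = bᶜ` is a basis of `M` and `U ≃ k^c` by restriction.
An `x ∈ U^⊥` vanishing on `b` is supported on `c`; pairing it with the `u ∈ U` whose restriction
to `c` is the indicator of `j ∈ c` gives `x j = 0`, so `U^⊥ → k^b` is injective. It is then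
bijective by counting dimensions: `dim U^⊥ = n - dim U = n - |c| = |b|`.
-/

noncomputable def dotWith {k : Type*} [Field k] {n : ℕ} (u : Fin n → k) :
    (Fin n → k) →ₗ[k] k :=
  ∑ i, u i • (LinearMap.proj i : (Fin n → k) →ₗ[k] k)

noncomputable def dualPerp {k : Type*} [Field k] {n : ℕ} (U : Submodule k (Fin n → k)) :
    Submodule k (Fin n → k) :=
  ⨅ u ∈ U, LinearMap.ker (dotWith u)

open Module

section

variable {k : Type*} [Field k]

def Submodule.coordRestrict {ι : Type*} (V : Submodule k (ι → k)) (s : Set ι) :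
    V →ₗ[k] (s → k) :=
  LinearMap.funLeft k k ((↑) : s → ι) ∘ₗ V.subtype

theorem finrank_fun_add_finrank_fun_compl {ι : Type*} [Fintype ι] (s : Set ι) :
    finrank k (s → k) + finrank k (↥sᶜ → k) = Fintype.card ι := by
  classical
  rw [finrank_fintype_fun_eq_card, finrank_fintype_fun_eq_card, ← Fintype.card_sum]
  exact Fintype.card_congr (Equiv.Set.sumCompl s)

theorem eq_zero_of_forall_dotProduct_eq_zero {ι : Type*} [Fintype ι]
    {U : Submodule k (ι → k)} {s : Set ι} (hU : Function.Surjective (U.coordRestrict sᶜ))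
    {x : ι → k} (hx : ∀ u ∈ U, u ⬝ᵥ x = 0) (hxs : ∀ i ∈ s, x i = 0) : x = 0 := by
  classical
  funext j
  by_cases hj : j ∈ s
  · exact hxs j hj
  obtain ⟨u, hu⟩ := hU (Pi.single (⟨j, hj⟩ : ↥sᶜ) (1 : k))
  have hu_apply (i : ι) (hi : i ∉ s) :
      (u : ι → k) i = (Pi.single (⟨j, hj⟩ : ↥sᶜ) (1 : k) : ↥sᶜ → k) ⟨i, hi⟩ :=
    congrFun hu ⟨i, hi⟩
  calc x j = (u : ι → k) ⬝ᵥ x := by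
        rw [dotProduct, Finset.sum_eq_single j]
        · simp [hu_apply j hj]
        · intro i _ hij
          by_cases hi : i ∈ s
          · simp [hxs i hi]
          · simp [hu_apply i hi, Subtype.ext_iff, hij]
        · simp
    _ = 0 := hx u u.2

variable {n : ℕ}

theorem dotWith_apply (u x : Fin n → k) : dotWith u x = u ⬝ᵥ x := by
  simp [dotWith, dotProduct]

theorem mem_dualPerp_iff {U : Submodule k (Fin n → k)} {x : Fin n → k} :
    x ∈ dualPerp U ↔ ∀ u ∈ U, u ⬝ᵥ x = 0 := by
  simp [dualPerp, dotWith_apply]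

theorem dualPerp_eq_dualCoannihilator (U : Submodule k (Fin n → k)) :
    dualPerp U = (U.map (dotProductEquiv k (Fin n)).toLinearMap).dualCoannihilator := by
  ext x
  simp only [mem_dualPerp_iff, Submodule.mem_dualCoannihilator, Submodule.mem_map,
    forall_exists_index, and_imp, forall_apply_eq_imp_iff₂]
  rfl

theorem finrank_add_finrank_dualPerp (U : Submodule k (Fin n → k)) :
    finrank k U + finrank k (dualPerp U) = n := by
  rw [dualPerp_eq_dualCoannihilator, ← LinearEquiv.finrank_map_eq (dotProductEquiv k (Fin n)) U,
    Subspace.finrank_add_finrank_dualCoannihilator_eq, finrank_fin_fun]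

theorem injective_coordRestrict_dualPerp {U : Submodule k (Fin n → k)} {s : Set (Fin n)}
    (hU : Function.Surjective (U.coordRestrict sᶜ)) :
    Function.Injective ((dualPerp U).coordRestrict s) := by
  rw [← LinearMap.ker_eq_bot, Submodule.eq_bot_iff]
  exact fun x hx => Subtype.ext <| eq_zero_of_forall_dotProduct_eq_zero hU
    (mem_dualPerp_iff.mp x.2) fun i hi => congrFun hx ⟨i, hi⟩

theorem bijective_coordRestrict_dualPerp {U : Submodule k (Fin n → k)} {s : Set (Fin n)}
    (hU : Function.Bijective (U.coordRestrict sᶜ)) :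
    Function.Bijective ((dualPerp U).coordRestrict s) := by
  have hinj := injective_coordRestrict_dualPerp hU.2
  have hrank : finrank k (dualPerp U) = finrank k (s → k) := by
    have hUs := (LinearEquiv.ofBijective _ hU).finrank_eq
    have hsum := finrank_fun_add_finrank_fun_compl (k := k) s
    have hperp := finrank_add_finrank_dualPerp U
    rw [Fintype.card_fin] at hsum
    omega
  exact ⟨hinj, (LinearMap.injective_iff_surjective_of_finrank_eq_finrank hrank).mp hinj⟩

end

/-- If `U ⊆ k^n` is a parameter space for a matroid `M` on `{1, …, n}`
(for every basis `b` of `M` the composite `U ↪ k^n ↠ span{t_i ∣ i ∈ b}` is an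
isomorphism), then `U^⊥` is a parameter space for the dual matroid `M^∨`: for every
basis `b` of `M^∨` the projection `U^⊥ → span{u_i ∣ i ∈ b}` is an isomorphism. -/
theorem dualPerp_parameter_space {k : Type*} [Field k] {n : ℕ}
    (M : Matroid (Fin n)) (hME : M.E = Set.univ)
    (U : Submodule k (Fin n → k))
    (hU : ∀ b : Set (Fin n), M.IsBase b →
      Function.Bijective (fun (u : U) (i : b) => (u : Fin n → k) i)) :
    ∀ b : Set (Fin n), M✶.IsBase b →
      Function.Bijective (fun (x : dualPerp U) (i : b) => (x : Fin n → k) i) := by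
  intro b hb
  have hbc : M.IsBase bᶜ := by
    simpa [hME, Set.compl_eq_univ_sdiff] using hb.compl_isBase_of_dual
  exact bijective_coordRestrict_dualPerp (hU bᶜ hbc)
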